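/- Let X be a finite nonempty set, let d, N ≥ 1 be integers and λ ≥ 1 a real, and let φ : X → ℝ^d satisfy ‖φ(x)‖₂ ≤ 1 for all x ∈ X. Let ν_1,…,ν_N be probability distributions on X and define, for 1 ≤ n ≤ N, M_n := λ·I_d + Σ_{i=1}^{n} Σ_{x∈X} ν_i(x)·φ(x)φ(x)ᵀ. Then Σ_{n=1}^{N} E_{x∼ν_n}[ ‖φ(x)‖_{M_n^{-1}} ] ≤ √( d·N·log( 1 + N/(d·λ) ) ). -/

import Mathlib

open Finset Matrix

/-- Euclidean (ℓ²) norm of a finite-dimensional real vector. -/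
noncomputable def l2norm {ι : Type*} [Fintype ι] (x : ι → ℝ) : ℝ :=
  Real.sqrt (∑ i, x i ^ 2)

/-- Matrix-weighted norm ‖x‖_M = √(xᵀ M x). -/
noncomputable def matNorm {ι : Type*} [Fintype ι] (M : Matrix ι ι ℝ) (x : ι → ℝ) : ℝ :=
  Real.sqrt (x ⬝ᵥ M.mulVec x)

/-
Put `G₀ = λI` and `Gₖ = Gₖ₋₁ + Vₖ` with `Vₖ = E_{νₖ}[φφᵀ]`, so that `Mₖ = Gₖ` and
`E_{νₖ}‖φ‖²_{Gₖ⁻¹} = tr(Gₖ⁻¹Vₖ)`. Applying `log x ≤ x - 1` to the eigenvalues of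
`Gₖ₋₁^{1/2} Gₖ⁻¹ Gₖ₋₁^{1/2}` gives `tr(Gₖ⁻¹Vₖ) ≤ log det Gₖ - log det Gₖ₋₁`, so the sum
telescopes to `log det G_N - d log λ`. As `tr G_N ≤ dλ + N`, AM-GM on the eigenvalues of `G_N`
bounds this by `d log(1 + N/(dλ))`, and Cauchy–Schwarz over the `N` distributions turns the
bound on expected squared norms into the bound on expected norms.
-/

theorem Real.sum_mul_sqrt_le_sqrt_sum_mul_sum {ι : Type*} (s : Finset ι) {w f : ι → ℝ}
    (hw : ∀ i, 0 ≤ w i) (hf : ∀ i, 0 ≤ f i) :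
    ∑ i ∈ s, w i * √(f i) ≤ √((∑ i ∈ s, w i) * ∑ i ∈ s, w i * f i) := by
  calc ∑ i ∈ s, w i * √(f i) = ∑ i ∈ s, √(w i) * √(w i * f i) := by
        refine sum_congr rfl fun i _ => ?_
        rw [Real.sqrt_mul (hw i), ← mul_assoc, Real.mul_self_sqrt (hw i)]
    _ ≤ √(∑ i ∈ s, w i) * √(∑ i ∈ s, w i * f i) :=
        Real.sum_sqrt_mul_sqrt_le s hw fun i => mul_nonneg (hw i) (hf i)
    _ = √((∑ i ∈ s, w i) * ∑ i ∈ s, w i * f i) :=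
        (Real.sqrt_mul (sum_nonneg fun i _ => hw i) _).symm

namespace Matrix

section LogDet

variable {n : Type*} [Fintype n] [DecidableEq n]

theorem PosDef.log_det_le {A : Matrix n n ℝ} (hA : A.PosDef) {c : ℝ} (hc : 0 < c) :
    Real.log A.det ≤ Fintype.card n * (Real.log c - 1) + A.trace / c := by
  set μ := hA.isHermitian.eigenvalues
  have hdet : A.det = ∏ i, μ i := by simpa using hA.isHermitian.det_eq_prod_eigenvalues
  have htr : A.trace = ∑ i, μ i := by simpa using hA.isHermitian.trace_eq_sum_eigenvalues
  rw [hdet, htr, Real.log_prod fun i _ => (hA.eigenvalues_pos i).ne']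
  calc ∑ i, Real.log (μ i) ≤ ∑ i, (Real.log c - 1 + μ i / c) := by
        refine sum_le_sum fun i _ => ?_
        have := Real.log_le_sub_one_of_pos (div_pos (hA.eigenvalues_pos i) hc)
        rw [Real.log_div (hA.eigenvalues_pos i).ne' hc.ne'] at this
        linarith
    _ = Fintype.card n * (Real.log c - 1) + (∑ i, μ i) / c := by
        rw [sum_add_distrib, sum_const, card_univ, nsmul_eq_mul, sum_div]

theorem PosDef.log_det_le_card_mul_log {A : Matrix n n ℝ} (hA : A.PosDef) {c : ℝ} (hc : 0 < c)
    (htr : A.trace ≤ Fintype.card n * c) : Real.log A.det ≤ Fintype.card n * Real.log c := by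
  have : A.trace / c ≤ Fintype.card n := by rwa [div_le_iff₀ hc]
  linarith [hA.log_det_le hc]

open scoped MatrixOrder in
theorem PosDef.trace_inv_mul_sub_le_log_det_sub {A B : Matrix n n ℝ} (hA : A.PosDef)
    (hB : B.PosDef) : (A⁻¹ * (A - B)).trace ≤ Real.log A.det - Real.log B.det := by
  set S := CFC.sqrt B
  have hSS : S * S = B := CFC.sqrt_mul_sqrt_self B hB.posSemidef.nonneg
  have hS : IsUnit S := isUnit_of_mul_isUnit_left (hSS ▸ hB.isUnit)
  have hSstar : star S = S := (CFC.sqrt_nonneg B).posSemidef.isHermitian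
  -- `S A⁻¹ S` is similar to `A⁻¹ B`, but symmetric.
  have hD : (S * A⁻¹ * S).PosDef := by
    simpa [hSstar] using (hS.posDef_star_left_conjugate_iff (x := A⁻¹)).mpr hA.inv
  have htr : (A⁻¹ * (A - B)).trace = Fintype.card n - (S * A⁻¹ * S).trace := by
    rw [mul_sub, nonsing_inv_mul _ (isUnit_iff_ne_zero.mpr hA.det_pos.ne'), trace_sub,
      trace_one, ← hSS, ← mul_assoc, trace_mul_cycle]
  have hdet : Real.log (S * A⁻¹ * S).det = Real.log B.det - Real.log A.det := by
    rw [det_mul, det_mul, mul_right_comm, ← det_mul, hSS, det_nonsing_inv,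
      Ring.inverse_eq_inv', Real.log_mul hB.det_pos.ne' (inv_ne_zero hA.det_pos.ne'),
      Real.log_inv, sub_eq_add_neg]
  have := hD.log_det_le one_pos
  rw [hdet, Real.log_one, div_one] at this
  linarith

theorem sum_range_trace_inv_mul_sub_le {G : ℕ → Matrix n n ℝ} (hG : ∀ k, (G k).PosDef) (N : ℕ) :
    ∑ k ∈ range N, ((G (k + 1))⁻¹ * (G (k + 1) - G k)).trace ≤
      Real.log (G N).det - Real.log (G 0).det := by
  rw [← sum_range_sub fun k => Real.log (G k).det]
  exact sum_le_sum fun k _ => (hG (k + 1)).trace_inv_mul_sub_le_log_det_sub (hG k)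

end LogDet

section SecondMoment

variable {X n : Type*} [Fintype X] [Fintype n]

def secondMoment (w : X → ℝ) (φ : X → n → ℝ) : Matrix n n ℝ :=
  ∑ x, w x • vecMulVec (φ x) (φ x)

theorem trace_mul_secondMoment (P : Matrix n n ℝ) (w : X → ℝ) (φ : X → n → ℝ) :
    (P * secondMoment w φ).trace = ∑ x, w x * (φ x ⬝ᵥ P *ᵥ φ x) := by
  simp only [secondMoment, Finset.mul_sum, Matrix.mul_smul, trace_sum, trace_smul, mul_vecMulVec,
    trace_vecMulVec, dotProduct_comm (P *ᵥ _), smul_eq_mul]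

theorem posSemidef_secondMoment {w : X → ℝ} (hw : ∀ x, 0 ≤ w x) (φ : X → n → ℝ) :
    (secondMoment w φ).PosSemidef :=
  posSemidef_sum _ fun x _ => by
    simpa using (posSemidef_vecMulVec_self_star (φ x)).smul (hw x)

theorem trace_secondMoment_le_one {w : X → ℝ} (hw : ∀ x, 0 ≤ w x) (hw1 : ∑ x, w x = 1)
    {φ : X → n → ℝ} (hφ : ∀ x, φ x ⬝ᵥ φ x ≤ 1) : (secondMoment w φ).trace ≤ 1 := by
  simp only [secondMoment, trace_sum, trace_smul, trace_vecMulVec, smul_eq_mul, ← hw1]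
  exact sum_le_sum fun x _ => by simpa using mul_le_mul_of_nonneg_left (hφ x) (hw x)

end SecondMoment

section RegularizedGram

variable {n : Type*} [DecidableEq n] {N : ℕ}

def regularizedGram (lam : ℝ) (V : Fin N → Matrix n n ℝ) (m : ℕ) : Matrix n n ℝ :=
  lam • 1 + ∑ i ∈ univ.filter (fun i : Fin N => (i : ℕ) < m), V i

variable {lam : ℝ} {V : Fin N → Matrix n n ℝ}

theorem regularizedGram_zero : regularizedGram lam V 0 = lam • 1 := by
  simp [regularizedGram]

theorem regularizedGram_succ (k : Fin N) :
    regularizedGram lam V (k + 1) = regularizedGram lam V k + V k := by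
  have : univ.filter (fun i : Fin N => (i : ℕ) < k + 1) =
      insert k (univ.filter fun i : Fin N => (i : ℕ) < k) := by
    ext i
    simp only [mem_filter, mem_univ, true_and, mem_insert, Fin.ext_iff]
    omega
  rw [regularizedGram, regularizedGram, this, sum_insert (by simp), add_comm (V k), add_assoc]

theorem regularizedGram_succ_eq_add_sum_le (k : Fin N) :
    regularizedGram lam V (k + 1) = lam • 1 + ∑ i ∈ univ.filter (· ≤ k), V i := by
  rw [regularizedGram]
  congr 2
  ext i
  simp only [mem_filter, mem_univ, true_and, Fin.le_def]
  omega

theorem regularizedGram_posDef (hlam : 0 < lam) (hV : ∀ i, (V i).PosSemidef) (m : ℕ) :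
    (regularizedGram lam V m).PosDef :=
  (PosDef.one.smul hlam).add_posSemidef (posSemidef_sum _ fun i _ => hV i)

theorem trace_regularizedGram_le [Fintype n] (htr : ∀ i, (V i).trace ≤ 1) (m : ℕ) :
    (regularizedGram lam V m).trace ≤ Fintype.card n * lam + N := by
  rw [regularizedGram, trace_add, trace_smul, trace_one, trace_sum, smul_eq_mul, mul_comm]
  gcongr
  calc ∑ i ∈ univ.filter (fun i : Fin N => (i : ℕ) < m), (V i).trace
      ≤ ∑ i ∈ univ.filter (fun i : Fin N => (i : ℕ) < m), 1 := sum_le_sum fun i _ => htr i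
    _ ≤ N := by simpa using card_le_univ (univ.filter fun i : Fin N => (i : ℕ) < m)

theorem log_det_regularizedGram_sub_le [Fintype n] [Nonempty n] (hlam : 0 < lam)
    (hV : ∀ i, (V i).PosSemidef) (htr : ∀ i, (V i).trace ≤ 1) :
    Real.log (regularizedGram lam V N).det - Real.log (regularizedGram lam V 0).det ≤
      Fintype.card n * Real.log (1 + N / (Fintype.card n * lam)) := by
  have hn : (0 : ℝ) < Fintype.card n := Nat.cast_pos.mpr Fintype.card_pos
  have hc : 0 < lam + N / Fintype.card n := by positivity
  have hGN : Real.log (regularizedGram lam V N).det ≤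
      Fintype.card n * Real.log (lam + N / Fintype.card n) := by
    refine (regularizedGram_posDef hlam hV N).log_det_le_card_mul_log hc
      ((trace_regularizedGram_le htr N).trans_eq ?_)
    field_simp
  have hG0 : Real.log (regularizedGram lam V 0).det = Fintype.card n * Real.log lam := by
    rw [regularizedGram_zero, det_smul, det_one, mul_one, Real.log_pow]
  have hratio : Real.log (lam + N / Fintype.card n) - Real.log lam =
      Real.log (1 + N / (Fintype.card n * lam)) := by
    rw [← Real.log_div hc.ne' hlam.ne']
    congr 1
    field_simp
  rw [hG0, ← hratio, mul_sub]
  exact sub_le_sub_right hGN _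

theorem sum_trace_inv_regularizedGram_mul_le [Fintype n] [Nonempty n] (hlam : 0 < lam)
    (hV : ∀ i, (V i).PosSemidef) (htr : ∀ i, (V i).trace ≤ 1) :
    ∑ k : Fin N, ((regularizedGram lam V (k + 1))⁻¹ * V k).trace ≤
      Fintype.card n * Real.log (1 + N / (Fintype.card n * lam)) := by
  set G := regularizedGram lam V
  calc ∑ k : Fin N, ((G (k + 1))⁻¹ * V k).trace
      = ∑ k ∈ range N, ((G (k + 1))⁻¹ * (G (k + 1) - G k)).trace := by
        rw [← Fin.sum_univ_eq_sum_range fun k => ((G (k + 1))⁻¹ * (G (k + 1) - G k)).trace]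
        simp_rw [G, regularizedGram_succ, add_sub_cancel_left]
    _ ≤ Real.log (G N).det - Real.log (G 0).det :=
        sum_range_trace_inv_mul_sub_le (regularizedGram_posDef hlam hV) N
    _ ≤ _ := log_det_regularizedGram_sub_le hlam hV htr

end RegularizedGram

end Matrix

theorem dotProduct_self_le_one_of_l2norm_le_one {ι : Type*} [Fintype ι] {x : ι → ℝ}
    (hx : l2norm x ≤ 1) : x ⬝ᵥ x ≤ 1 := by
  rw [l2norm, Real.sqrt_le_one] at hx
  simpa [dotProduct, sq] using hx

theorem summed_elliptical_potential_general
    {X : Type*} [Fintype X]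
    {d N : ℕ} (hd : 1 ≤ d)
    {lam : ℝ} (hlam : 1 ≤ lam)
    (φ : X → Fin d → ℝ) (hφ : ∀ x, l2norm (φ x) ≤ 1)
    (ν : Fin N → X → ℝ) (hνpos : ∀ k x, 0 ≤ ν k x) (hνsum : ∀ k, ∑ x, ν k x = 1)
    (Mm : Fin N → Matrix (Fin d) (Fin d) ℝ)
    (hMm : ∀ k, Mm k = lam • (1 : Matrix (Fin d) (Fin d) ℝ) +
      ∑ i ∈ Finset.univ.filter (fun i => i ≤ k), ∑ x, ν i x • vecMulVec (φ x) (φ x)) :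
    (∑ k : Fin N, ∑ x, ν k x * matNorm (Mm k)⁻¹ (φ x)) ≤
      Real.sqrt (d * N * Real.log (1 + N / (d * lam))) := by
  have : Nonempty (Fin d) := Fin.pos_iff_nonempty.mp hd
  have hlam0 : 0 < lam := by linarith
  set V := fun k => secondMoment (ν k) φ
  have hV : ∀ k, (V k).PosSemidef := fun k => posSemidef_secondMoment (hνpos k) φ
  have hMG : ∀ k, Mm k = regularizedGram lam V (k + 1) := fun k => by
    rw [hMm, regularizedGram_succ_eq_add_sum_le]
    rfl
  have hM : ∀ k, (Mm k).PosDef := fun k => hMG k ▸ regularizedGram_posDef hlam0 hV _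
  have hq : ∀ k x, 0 ≤ φ x ⬝ᵥ (Mm k)⁻¹ *ᵥ φ x := fun k x => by
    simpa using (hM k).inv.posSemidef.dotProduct_mulVec_nonneg (φ x)
  have hpot := sum_trace_inv_regularizedGram_mul_le hlam0 hV fun k =>
    trace_secondMoment_le_one (hνpos k) (hνsum k) fun x =>
      dotProduct_self_le_one_of_l2norm_le_one (hφ x)
  simp only [Fintype.card_fin, ← hMG] at hpot
  calc ∑ k : Fin N, ∑ x, ν k x * matNorm (Mm k)⁻¹ (φ x)
      = ∑ p : Fin N × X, ν p.1 p.2 * √(φ p.2 ⬝ᵥ (Mm p.1)⁻¹ *ᵥ φ p.2) := by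
        rw [Fintype.sum_prod_type]
        rfl
    _ ≤ √((∑ p : Fin N × X, ν p.1 p.2) *
          ∑ p : Fin N × X, ν p.1 p.2 * (φ p.2 ⬝ᵥ (Mm p.1)⁻¹ *ᵥ φ p.2)) :=
        Real.sum_mul_sqrt_le_sqrt_sum_mul_sum _ (fun p => hνpos _ _) fun p => hq _ _
    _ = √(N * ∑ k, ((Mm k)⁻¹ * V k).trace) := by
        simp_rw [Fintype.sum_prod_type, hνsum, V, trace_mul_secondMoment]
        simp
    _ ≤ √(d * N * Real.log (1 + N / (d * lam))) := by
        rw [mul_comm (d : ℝ), mul_assoc]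
        gcongr

/-- Summed elliptical-potential bound for population covariances of a sequence of
distributions. -/
theorem summed_elliptical_potential
    {X : Type*} [Fintype X] [Nonempty X]
    {d N : ℕ} (hd : 1 ≤ d) (hN : 1 ≤ N)
    {lam : ℝ} (hlam : 1 ≤ lam)
    (φ : X → Fin d → ℝ) (hφ : ∀ x, l2norm (φ x) ≤ 1)
    (ν : Fin N → X → ℝ) (hνpos : ∀ k x, 0 ≤ ν k x) (hνsum : ∀ k, ∑ x, ν k x = 1)
    (Mm : Fin N → Matrix (Fin d) (Fin d) ℝ)
    (hMm : ∀ k, Mm k = lam • (1 : Matrix (Fin d) (Fin d) ℝ) +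
      ∑ i ∈ Finset.univ.filter (fun i => i ≤ k), ∑ x, ν i x • vecMulVec (φ x) (φ x)) :
    (∑ k : Fin N, ∑ x, ν k x * matNorm (Mm k)⁻¹ (φ x)) ≤
      Real.sqrt (d * N * Real.log (1 + N / (d * lam))) :=
  summed_elliptical_potential_general hd hlam φ hφ ν hνpos hνsum Mm hMm
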